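/- arXiv:2311.01274 — 5 statements merged into one kernel-verified Lean document; each statement's English description precedes it below -/
import Mathlib

section
/- Let ρ : [a,b] → ℝ be continuous and strictly positive with a < b, and let φ : [0,1] → ℝ be continuously differentiable with φ(0) = a, φ(1) = b, and suppose there is a constant C such that ρ(φ(ξ))·φ'(ξ) = C for all ξ ∈ [0,1] (i.e., φ solves the mesh PDE (ρ(x)x_ξ)_ξ = 0 with x(0) = a, x(1) = b). Then C = ∫_a^b ρ(t) dt > 0, φ is strictly increasing (hence a bijection of [0,1] onto [a,b]), and for every integer N ≥ 1 the mesh with points x_i = φ(i/N), i = 0, 1, …, N, equidistributes ρ. -/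
/-!
Along a solution of `ρ(φ) φ' = C`, wherever `φ` takes values in `[a, b]` its derivative has the
sign of `C`. Since `φ` climbs from `a` to `b`, the mean value theorem on a stretch where it stays
inside `[a, b]` gives a point with `φ' > 0`, so `C > 0`. Then `φ` cannot cross the level `a`
or the level `b` downwards, as `φ' ≤ 0` at such a crossing; so it stays in `[a, b]`, hence `φ' > 0` everywhere and
`φ` is a strictly increasing bijection onto `[a, b]`. Finally the substitution `t = φ(ξ)` gives
`∫_{φ u}^{φ v} ρ = C (v - u)`, which at `(u, v) = (0, 1)` identifies `C` and at
`(u, v) = ((i - 1)/N, i/N)` is the equidistribution property.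
-/

open Set

theorem IsLocalMaxOn.sub_mul_hasDerivWithinAt_nonpos {f : ℝ → ℝ} {s : Set ℝ} {a y d : ℝ}
    (h : IsLocalMaxOn f s a) (hf : HasDerivWithinAt f d s a) (hy : segment ℝ a y ⊆ s) :
    (y - a) * d ≤ 0 := by
  simpa [mul_comm] using
    h.hasFDerivWithinAt_nonpos hf.hasFDerivWithinAt (sub_mem_posTangentConeAt_of_segment_subset hy)

section LevelCrossing

variable {f f' : ℝ → ℝ} {u v c : ℝ}

theorem exists_last_eq_of_le_of_lt (huv : u ≤ v) (hf : ContinuousOn f (Icc u v))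
    (hu : f u ≤ c) (hv : c < f v) : ∃ t ∈ Ico u v, f t = c ∧ ∀ ξ ∈ Ioc t v, c < f ξ := by
  have hK : IsCompact (Icc u v ∩ f ⁻¹' Iic c) := isCompact_Icc.of_isClosed_subset
    (hf.preimage_isClosed_of_isClosed isClosed_Icc isClosed_Iic) inter_subset_left
  obtain ⟨t, ⟨ht, hft⟩, hgreatest⟩ := hK.exists_isGreatest ⟨u, left_mem_Icc.2 huv, hu⟩
  have hafter : ∀ ξ ∈ Ioc t v, c < f ξ := fun ξ hξ => not_le.1 fun hξc =>
    (hgreatest ⟨⟨ht.1.trans hξ.1.le, hξ.2⟩, hξc⟩).not_gt hξ.1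
  have htv : t < v := ht.2.lt_of_ne (by rintro rfl; exact (hft.trans_lt hv).false)
  have hsub : Ioc t v ⊆ Icc u v := fun ξ hξ => ⟨ht.1.trans hξ.1.le, hξ.2⟩
  have hclosure : t ∈ closure (Ioc t v) := by
    rw [closure_Ioc htv.ne]; exact left_mem_Icc.2 htv.le
  have hct : f t ∈ Ici c := isClosed_Ici.closure_subset
    (((hf t ht).mono hsub).mem_closure hclosure fun ξ hξ => (hafter ξ hξ).le)
  exact ⟨t, ⟨ht.1, htv⟩, le_antisymm hft hct, hafter⟩

theorem exists_first_eq_of_lt_of_le (huv : u ≤ v) (hf : ContinuousOn f (Icc u v))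
    (hu : f u < c) (hv : c ≤ f v) : ∃ t ∈ Ioc u v, f t = c ∧ ∀ ξ ∈ Ico u t, f ξ < c := by
  have hK : IsCompact (Icc u v ∩ f ⁻¹' Ici c) := isCompact_Icc.of_isClosed_subset
    (hf.preimage_isClosed_of_isClosed isClosed_Icc isClosed_Ici) inter_subset_left
  obtain ⟨t, ⟨ht, hft⟩, hleast⟩ := hK.exists_isLeast ⟨v, right_mem_Icc.2 huv, hv⟩
  have hbefore : ∀ ξ ∈ Ico u t, f ξ < c := fun ξ hξ => not_le.1 fun hξc =>
    (hleast ⟨⟨hξ.1, hξ.2.le.trans ht.2⟩, hξc⟩).not_gt hξ.2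
  have hut : u < t := ht.1.lt_of_ne' (by rintro rfl; exact (hu.trans_le hft).false)
  have hsub : Ico u t ⊆ Icc u v := fun ξ hξ => ⟨hξ.1, hξ.2.le.trans ht.2⟩
  have hclosure : t ∈ closure (Ico u t) := by
    rw [closure_Ico hut.ne]; exact right_mem_Icc.2 hut.le
  have hct : f t ∈ Iic c := isClosed_Iic.closure_subset
    (((hf t ht).mono hsub).mem_closure hclosure fun ξ hξ => (hbefore ξ hξ).le)
  exact ⟨t, ⟨hut, ht.2⟩, le_antisymm hct hft, hbefore⟩

theorem exists_mem_Ioo_deriv_pos_of_lt (huv : u ≤ v) (hf : ContinuousOn f (Icc u v))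
    (hf' : ∀ ξ ∈ Ioo u v, HasDerivAt f (f' ξ) ξ) (hlt : f u < f v) :
    ∃ t ∈ Ioo u v, f t ∈ Ioo (f u) (f v) ∧ 0 < f' t := by
  obtain ⟨t₁, ht₁, hft₁, hafter⟩ := exists_last_eq_of_le_of_lt huv hf le_rfl hlt
  obtain ⟨t₂, ht₂, hft₂, hbefore⟩ := exists_first_eq_of_lt_of_le ht₁.2.le
    (hf.mono (Icc_subset_Icc_left ht₁.1)) (hft₁.symm ▸ hlt) le_rfl
  obtain ⟨t, ht, hslope⟩ := exists_hasDerivAt_eq_slope f f' ht₂.1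
    (hf.mono (Icc_subset_Icc ht₁.1 ht₂.2))
    fun ξ hξ => hf' ξ ⟨ht₁.1.trans_lt hξ.1, hξ.2.trans_le ht₂.2⟩
  refine ⟨t, ⟨ht₁.1.trans_lt ht.1, ht.2.trans_le ht₂.2⟩,
    ⟨hafter t ⟨ht.1, ht.2.le.trans ht₂.2⟩, hbefore t ⟨ht.1.le, ht.2⟩⟩, ?_⟩
  rw [hslope, hft₁, hft₂]
  exact div_pos (sub_pos.2 hlt) (sub_pos.2 ht₂.1)

theorem le_of_deriv_pos_on_level_of_le_left
    (hf : ∀ ξ ∈ Icc u v, HasDerivWithinAt f (f' ξ) (Icc u v) ξ)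
    (hlevel : ∀ ξ ∈ Icc u v, f ξ = c → 0 < f' ξ) (hu : c ≤ f u) :
    ∀ s ∈ Icc u v, c ≤ f s := by
  intro s hs
  by_contra! hlt
  have hfc : ContinuousOn f (Icc u s) := fun ξ hξ =>
    (hf ξ ⟨hξ.1, hξ.2.trans hs.2⟩).continuousWithinAt.mono (Icc_subset_Icc_right hs.2)
  obtain ⟨t, ht, hft, hafter⟩ :=
    exists_last_eq_of_le_of_lt hs.1 hfc.neg (neg_le_neg hu) (neg_lt_neg hlt)
  replace hft : f t = c := neg_inj.1 hft
  have htI : t ∈ Icc u v := ⟨ht.1, ht.2.le.trans hs.2⟩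
  have hmax : IsMaxOn f (Icc t s) t := isMaxOn_iff.2 fun ξ hξ => by
    rcases hξ.1.eq_or_lt with rfl | htξ
    · exact le_rfl
    · exact hft ▸ (neg_lt_neg_iff.1 (hafter ξ ⟨htξ, hξ.2⟩)).le
  have hslope := hmax.localize.sub_mul_hasDerivWithinAt_nonpos
    ((hf t htI).mono (Icc_subset_Icc ht.1 hs.2)) (segment_eq_Icc ht.2.le).subset
  nlinarith [hlevel t htI hft, sub_pos.2 ht.2]

theorem le_of_deriv_pos_on_level_of_le_right
    (hf : ∀ ξ ∈ Icc u v, HasDerivWithinAt f (f' ξ) (Icc u v) ξ)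
    (hlevel : ∀ ξ ∈ Icc u v, f ξ = c → 0 < f' ξ) (hv : f v ≤ c) :
    ∀ s ∈ Icc u v, f s ≤ c := by
  intro s hs
  by_contra! hlt
  have hfc : ContinuousOn f (Icc s v) := fun ξ hξ =>
    (hf ξ ⟨hs.1.trans hξ.1, hξ.2⟩).continuousWithinAt.mono (Icc_subset_Icc_left hs.1)
  obtain ⟨t, ht, hft, hbefore⟩ :=
    exists_first_eq_of_lt_of_le hs.2 hfc.neg (neg_lt_neg hlt) (neg_le_neg hv)
  replace hft : f t = c := neg_inj.1 hft
  have htI : t ∈ Icc u v := ⟨hs.1.trans ht.1.le, ht.2⟩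
  have hmin : IsMinOn f (Icc s t) t := isMinOn_iff.2 fun ξ hξ => by
    rcases hξ.2.eq_or_lt with rfl | hξt
    · exact le_rfl
    · exact hft ▸ (neg_lt_neg_iff.1 (hbefore ξ ⟨hξ.1, hξt⟩)).le
  have hslope := hmin.neg.localize.sub_mul_hasDerivWithinAt_nonpos
    ((hf t htI).mono (Icc_subset_Icc hs.1 ht.2)).neg
    (by rw [segment_symm, segment_eq_Icc ht.1.le])
  nlinarith [hlevel t htI hft, sub_pos.2 ht.1]

end LevelCrossing

theorem intervalIntegral_eq_mul_sub_of_comp_mul_deriv_eq {ρ φ φ' : ℝ → ℝ} {u v C : ℝ}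
    (hφ : ContinuousOn φ (uIcc u v)) (hφ' : ∀ ξ ∈ Ioo (min u v) (max u v), HasDerivAt φ (φ' ξ) ξ)
    (hφ'c : ContinuousOn φ' (uIcc u v)) (hρ : ContinuousOn ρ (φ '' uIcc u v))
    (hC : ∀ ξ ∈ uIcc u v, ρ (φ ξ) * φ' ξ = C) :
    ∫ t in φ u..φ v, ρ t = C * (v - u) := by
  have hconst : EqOn (fun ξ => (ρ ∘ φ) ξ * φ' ξ) (fun _ => C) (uIcc u v) := hC
  rw [← intervalIntegral.integral_comp_mul_deriv'' hφ (fun ξ hξ => (hφ' ξ hξ).hasDerivWithinAt)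
    hφ'c hρ, intervalIntegral.integral_congr hconst, intervalIntegral.integral_const, smul_eq_mul,
    mul_comm]

theorem div_natCast_mem_Icc_zero_one {x : ℝ} {N : ℕ} (hx₀ : 0 ≤ x) (hxN : x ≤ N) :
    x / N ∈ Icc (0 : ℝ) 1 :=
  ⟨div_nonneg hx₀ N.cast_nonneg, div_le_one_of_le₀ hxN N.cast_nonneg⟩

section MeshPDE

variable {a b C : ℝ} {ρ φ φ' : ℝ → ℝ}

theorem mesh_const_pos (hab : a < b) (hρpos : ∀ x ∈ Icc a b, 0 < ρ x)
    (hφc : ContinuousOn φ (Icc 0 1)) (hφ' : ∀ ξ ∈ Ioo (0 : ℝ) 1, HasDerivAt φ (φ' ξ) ξ)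
    (hφ0 : φ 0 = a) (hφ1 : φ 1 = b) (hC : ∀ ξ ∈ Icc (0 : ℝ) 1, ρ (φ ξ) * φ' ξ = C) :
    0 < C := by
  obtain ⟨t, ht, hφt, hφ't⟩ :=
    exists_mem_Ioo_deriv_pos_of_lt zero_le_one hφc hφ' (by rwa [hφ0, hφ1])
  rw [hφ0, hφ1] at hφt
  rw [← hC t (Ioo_subset_Icc_self ht)]
  exact mul_pos (hρpos _ (Ioo_subset_Icc_self hφt)) hφ't

theorem mesh_deriv_pos (hρpos : ∀ x ∈ Icc a b, 0 < ρ x)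
    (hC : ∀ ξ ∈ Icc (0 : ℝ) 1, ρ (φ ξ) * φ' ξ = C) (hCpos : 0 < C) {ξ : ℝ}
    (hξ : ξ ∈ Icc (0 : ℝ) 1) (hφξ : φ ξ ∈ Icc a b) : 0 < φ' ξ :=
  pos_of_mul_pos_right (hC ξ hξ ▸ hCpos) (hρpos _ hφξ).le

theorem mesh_mapsTo_Icc (hab : a ≤ b) (hρpos : ∀ x ∈ Icc a b, 0 < ρ x)
    (hφderiv : ∀ ξ ∈ Icc (0 : ℝ) 1, HasDerivWithinAt φ (φ' ξ) (Icc 0 1) ξ)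
    (hφ0 : φ 0 = a) (hφ1 : φ 1 = b) (hC : ∀ ξ ∈ Icc (0 : ℝ) 1, ρ (φ ξ) * φ' ξ = C)
    (hCpos : 0 < C) : MapsTo φ (Icc 0 1) (Icc a b) := fun ξ hξ =>
  ⟨le_of_deriv_pos_on_level_of_le_left hφderiv
      (fun _ ht hφt => mesh_deriv_pos hρpos hC hCpos ht (hφt ▸ left_mem_Icc.2 hab)) hφ0.ge ξ hξ,
    le_of_deriv_pos_on_level_of_le_right hφderiv
      (fun _ ht hφt => mesh_deriv_pos hρpos hC hCpos ht (hφt ▸ right_mem_Icc.2 hab)) hφ1.le ξ hξ⟩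

theorem mesh_integral_eq (hρc : ContinuousOn ρ (Icc a b)) (hφc : ContinuousOn φ (Icc 0 1))
    (hφ' : ∀ ξ ∈ Ioo (0 : ℝ) 1, HasDerivAt φ (φ' ξ) ξ) (hφ'cont : ContinuousOn φ' (Icc 0 1))
    (hmaps : MapsTo φ (Icc 0 1) (Icc a b)) (hC : ∀ ξ ∈ Icc (0 : ℝ) 1, ρ (φ ξ) * φ' ξ = C)
    ⦃u v : ℝ⦄ (hu : u ∈ Icc (0 : ℝ) 1) (hv : v ∈ Icc (0 : ℝ) 1) :
    ∫ t in φ u..φ v, ρ t = C * (v - u) :=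
  have hsub := uIcc_subset_Icc hu hv
  intervalIntegral_eq_mul_sub_of_comp_mul_deriv_eq (hφc.mono hsub)
    (fun ξ hξ => hφ' ξ (Ioo_subset_Ioo (le_min hu.1 hv.1) (max_le hu.2 hv.2) hξ))
    (hφ'cont.mono hsub) (hρc.mono (hmaps.mono_left hsub).image_subset)
    fun ξ hξ => hC ξ (hsub hξ)

end MeshPDE

/-- Let `ρ : [a,b] → ℝ` be continuous and strictly positive with `a < b`, and let
`φ : [0,1] → ℝ` be continuously differentiable with `φ(0) = a`, `φ(1) = b`,
and suppose there is a constant `C` such that `ρ(φ(ξ))·φ'(ξ) = C` for all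
`ξ ∈ [0,1]` (i.e. `φ` solves the mesh PDE `(ρ(x)x_ξ)_ξ = 0` with
`x(0) = a`, `x(1) = b`).  Then `C = ∫_a^b ρ(t) dt > 0`, `φ` is strictly
increasing (hence a bijection of `[0,1]` onto `[a,b]`), and for every integer
`N ≥ 1` the mesh with points `x_i = φ(i/N)`, `i = 0, 1, …, N`,
equidistributes `ρ`. -/
theorem mesh_generating_function_equidistributes
    (a b : ℝ) (hab : a < b) (ρ : ℝ → ℝ)
    (hρc : ContinuousOn ρ (Set.Icc a b))
    (hρpos : ∀ x ∈ Set.Icc a b, 0 < ρ x)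
    (φ φ' : ℝ → ℝ)
    (hφderiv : ∀ ξ ∈ Set.Icc (0 : ℝ) 1, HasDerivWithinAt φ (φ' ξ) (Set.Icc 0 1) ξ)
    (hφ'cont : ContinuousOn φ' (Set.Icc 0 1))
    (hφ0 : φ 0 = a) (hφ1 : φ 1 = b)
    (C : ℝ) (hC : ∀ ξ ∈ Set.Icc (0 : ℝ) 1, ρ (φ ξ) * φ' ξ = C) :
    C = (∫ t in a..b, ρ t) ∧ 0 < C ∧
    StrictMonoOn φ (Set.Icc 0 1) ∧
    φ '' Set.Icc 0 1 = Set.Icc a b ∧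
    (∀ N : ℕ, 1 ≤ N → ∀ i : ℕ, 1 ≤ i → i ≤ N →
      ∫ t in (φ (((i : ℝ) - 1) / N))..(φ ((i : ℝ) / N)), ρ t
        = (1 / (N : ℝ)) * ∫ t in a..b, ρ t) := by
  have hφc : ContinuousOn φ (Icc 0 1) := fun ξ hξ => (hφderiv ξ hξ).continuousWithinAt
  have hφ' : ∀ ξ ∈ Ioo (0 : ℝ) 1, HasDerivAt φ (φ' ξ) ξ := fun ξ hξ =>
    (hφderiv ξ (Ioo_subset_Icc_self hξ)).hasDerivAt (Icc_mem_nhds hξ.1 hξ.2)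
  have hCpos := mesh_const_pos hab hρpos hφc hφ' hφ0 hφ1 hC
  have hmaps := mesh_mapsTo_Icc hab.le hρpos hφderiv hφ0 hφ1 hC hCpos
  have hint := mesh_integral_eq hρc hφc hφ' hφ'cont hmaps hC
  have hCint : C = ∫ t in a..b, ρ t := by
    simpa [hφ0, hφ1] using
      (hint (left_mem_Icc.2 zero_le_one) (right_mem_Icc.2 zero_le_one)).symm
  refine ⟨hCint, hCpos, ?_, ?_, ?_⟩
  · rw [← interior_Icc] at hφ'
    exact strictMonoOn_of_hasDerivWithinAt_pos (convex_Icc 0 1) hφc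
      (fun ξ hξ => (hφ' ξ hξ).hasDerivWithinAt)
      fun ξ hξ => mesh_deriv_pos hρpos hC hCpos (interior_subset hξ) (hmaps (interior_subset hξ))
  · refine hmaps.image_subset.antisymm ?_
    simpa [hφ0, hφ1] using intermediate_value_Icc zero_le_one hφc
  · intro N _ i hi hiN
    have hi₁ : (1 : ℝ) ≤ i := by exact_mod_cast hi
    have hiN' : (i : ℝ) ≤ N := by exact_mod_cast hiN
    rw [hint (div_natCast_mem_Icc_zero_one (by linarith) (by linarith))
      (div_natCast_mem_Icc_zero_one (by linarith) hiN'), ← hCint]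
    ring
end

section
/- Let ρ : [a,b] → ℝ be continuous and strictly positive with a < b. Define F(x) = ∫_a^x ρ(t) dt and φ(ξ) = F⁻¹(ξ·F(b)) for ξ ∈ [0,1]. Then φ is a well-defined, continuously differentiable, strictly increasing bijection from [0,1] onto [a,b] with φ(0) = a and φ(1) = b, and it satisfies ρ(φ(ξ))·φ'(ξ) = ∫_a^b ρ(t) dt for all ξ ∈ [0,1]; that is, φ solves the mesh PDE (ρ(x)x_ξ)_ξ = 0 with boundary conditions x(0) = a, x(1) = b. -/
/-!
Extend `ρ` to `ℝ` by constants and divide by `∫ t in a..b, ρ t`. The primitive from `a` of the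
resulting density `r` has slope at least `min ρ / ∫ ρ > 0`, so it is an order automorphism of `ℝ`
sending `a ↦ 0` and `b ↦ 1`; the mesh generating function is its inverse `φ`. By the inverse
function rule `φ' = 1 / r ∘ φ`, which on `[0, 1]` is exactly `ρ (φ ξ) φ' ξ = ∫ t in a..b, ρ t`.
-/

open Set Filter MeasureTheory intervalIntegral

section Expanding

variable {F : ℝ → ℝ} {c : ℝ}

theorem strictMono_of_mul_sub_le_sub (hc : 0 < c)
    (hF : ∀ ⦃x y⦄, x ≤ y → c * (y - x) ≤ F y - F x) : StrictMono F := fun x y hxy => by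
  linarith [hF hxy.le, mul_pos hc (sub_pos.2 hxy)]

theorem surjective_of_mul_sub_le_sub (hc : 0 < c) (hFc : Continuous F)
    (hF : ∀ ⦃x y⦄, x ≤ y → c * (y - x) ≤ F y - F x) : Function.Surjective F := by
  refine hFc.surjective ?_ ?_
  · have hlin : Tendsto (c * ·) atTop atTop := tendsto_id.const_mul_atTop hc
    refine tendsto_atTop_mono' _ ?_ (tendsto_atTop_add_const_left _ (F 0) hlin)
    filter_upwards [eventually_ge_atTop 0] with x hx
    linarith [hF hx]
  · have hlin : Tendsto (c * ·) atBot atBot := tendsto_id.const_mul_atBot hc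
    refine tendsto_atBot_mono' _ ?_ (tendsto_atBot_add_const_left _ (F 0) hlin)
    filter_upwards [eventually_le_atBot 0] with x hx
    linarith [hF hx]

end Expanding

section Primitive

variable {r : ℝ → ℝ}

theorem mul_sub_le_integral_sub {c : ℝ} (a : ℝ) (hr : Continuous r) (hcr : ∀ x, c ≤ r x)
    ⦃x y : ℝ⦄ (hxy : x ≤ y) : c * (y - x) ≤ (∫ t in a..y, r t) - ∫ t in a..x, r t :=
  mul_sub_le_image_sub_of_le_deriv
    (fun x => (hr.integral_hasStrictDerivAt a x).hasDerivAt.differentiableAt)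
    (fun x => (hr.integral_hasStrictDerivAt a x).hasDerivAt.deriv ▸ hcr x) hxy

noncomputable def primitiveOrderIso (a : ℝ) (hr : Continuous r) (hpos : ∃ c > 0, ∀ x, c ≤ r x) :
    ℝ ≃o ℝ :=
  StrictMono.orderIsoOfSurjective (fun x => ∫ t in a..x, r t)
    (strictMono_of_mul_sub_le_sub hpos.choose_spec.1
      (mul_sub_le_integral_sub a hr hpos.choose_spec.2))
    (surjective_of_mul_sub_le_sub hpos.choose_spec.1
      (continuous_primitive (fun _ _ => hr.intervalIntegrable _ _) a)
      (mul_sub_le_integral_sub a hr hpos.choose_spec.2))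

theorem hasDerivAt_primitiveOrderIso_symm (a : ℝ) (hr : Continuous r)
    (hpos : ∃ c > 0, ∀ x, c ≤ r x) (y : ℝ) :
    HasDerivAt (primitiveOrderIso a hr hpos).symm (r ((primitiveOrderIso a hr hpos).symm y))⁻¹ y :=
  have ⟨_, hc, hcr⟩ := hpos
  HasDerivAt.of_local_left_inverse (primitiveOrderIso a hr hpos).symm.continuous.continuousAt
    (hr.integral_hasStrictDerivAt a _).hasDerivAt (hc.trans_le (hcr _)).ne'
    (Eventually.of_forall (primitiveOrderIso a hr hpos).apply_symm_apply)

end Primitive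

section MeshDensity

variable {a b : ℝ} {ρ : ℝ → ℝ}

/-- Scaled so that its primitive from `a` maps `[a, b]` onto `[0, 1]`. -/
noncomputable def normalizedDensity (hab : a ≤ b) (ρ : ℝ → ℝ) (x : ℝ) : ℝ :=
  IccExtend hab ((Icc a b).domRestrict ρ) x / ∫ t in a..b, ρ t

theorem normalizedDensity_of_mem (hab : a ≤ b) {x : ℝ} (hx : x ∈ Icc a b) :
    normalizedDensity hab ρ x = ρ x / ∫ t in a..b, ρ t := by
  rw [normalizedDensity, IccExtend_of_mem _ _ hx, domRestrict_apply]

theorem integral_normalizedDensity (hab : a ≤ b) {x : ℝ} (hx : x ∈ Icc a b) :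
    ∫ t in a..x, normalizedDensity hab ρ t = (∫ t in a..x, ρ t) / ∫ t in a..b, ρ t := by
  rw [← intervalIntegral.integral_div]
  refine integral_congr fun t ht => normalizedDensity_of_mem hab ?_
  rw [uIcc_of_le hx.1] at ht
  exact ⟨ht.1, ht.2.trans hx.2⟩

theorem continuous_normalizedDensity (hab : a ≤ b) (hρc : ContinuousOn ρ (Icc a b)) :
    Continuous (normalizedDensity hab ρ) :=
  (continuous_IccExtend_iff.2 hρc.domRestrict).div_const _

theorem integral_pos_of_continuousOn_Icc (hab : a < b) (hρc : ContinuousOn ρ (Icc a b))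
    (hρpos : ∀ x ∈ Icc a b, 0 < ρ x) : 0 < ∫ t in a..b, ρ t :=
  intervalIntegral_pos_of_pos_on (hρc.intervalIntegrable_of_Icc hab.le)
    (fun x hx => hρpos x (Ioo_subset_Icc_self hx)) hab

theorem exists_pos_le_normalizedDensity (hab : a < b) (hρc : ContinuousOn ρ (Icc a b))
    (hρpos : ∀ x ∈ Icc a b, 0 < ρ x) : ∃ c > 0, ∀ x, c ≤ normalizedDensity hab.le ρ x := by
  have hI := integral_pos_of_continuousOn_Icc hab hρc hρpos
  obtain ⟨x₀, hx₀, hmin⟩ := isCompact_Icc.exists_isMinOn (nonempty_Icc.2 hab.le) hρc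
  refine ⟨ρ x₀ / ∫ t in a..b, ρ t, div_pos (hρpos x₀ hx₀) hI, fun x => ?_⟩
  rw [normalizedDensity, IccExtend_apply]
  exact div_le_div_of_nonneg_right (hmin (projIcc a b hab.le x).2) hI.le

/-- `x ↦ F(x) / F(b)` in the notation of the statement; the mesh generating function is its
inverse. -/
noncomputable def meshOrderIso (hab : a < b) (hρc : ContinuousOn ρ (Icc a b))
    (hρpos : ∀ x ∈ Icc a b, 0 < ρ x) : ℝ ≃o ℝ :=
  primitiveOrderIso a (continuous_normalizedDensity hab.le hρc)
    (exists_pos_le_normalizedDensity hab hρc hρpos)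

variable (hab : a < b) (hρc : ContinuousOn ρ (Icc a b)) (hρpos : ∀ x ∈ Icc a b, 0 < ρ x)

theorem meshOrderIso_apply_of_mem {x : ℝ} (hx : x ∈ Icc a b) :
    meshOrderIso hab hρc hρpos x = (∫ t in a..x, ρ t) / ∫ t in a..b, ρ t :=
  integral_normalizedDensity hab.le hx

theorem meshOrderIso_eq_iff {x ξ : ℝ} (hx : x ∈ Icc a b) :
    meshOrderIso hab hρc hρpos x = ξ ↔ ∫ t in a..x, ρ t = ξ * ∫ t in a..b, ρ t := by
  rw [meshOrderIso_apply_of_mem hab hρc hρpos hx,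
    div_eq_iff (integral_pos_of_continuousOn_Icc hab hρc hρpos).ne']

theorem meshOrderIso_symm_zero : (meshOrderIso hab hρc hρpos).symm 0 = a :=
  (OrderIso.symm_apply_eq _).2 <| Eq.symm <|
    (meshOrderIso_eq_iff hab hρc hρpos (left_mem_Icc.2 hab.le)).2 (by simp)

theorem meshOrderIso_symm_one : (meshOrderIso hab hρc hρpos).symm 1 = b :=
  (OrderIso.symm_apply_eq _).2 <| Eq.symm <|
    (meshOrderIso_eq_iff hab hρc hρpos (right_mem_Icc.2 hab.le)).2 (one_mul _).symm

theorem meshOrderIso_symm_image_Icc :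
    (meshOrderIso hab hρc hρpos).symm '' Icc 0 1 = Icc a b := by
  rw [OrderIso.image_Icc, meshOrderIso_symm_zero, meshOrderIso_symm_one]

end MeshDensity

/-- Let `ρ : [a,b] → ℝ` be continuous and strictly positive with `a < b`.
Define `F(x) = ∫_a^x ρ(t) dt` and `φ(ξ) = F⁻¹(ξ·F(b))` for `ξ ∈ [0,1]`
(the inverse is well defined: for each `ξ ∈ [0,1]` there is a unique
`x ∈ [a,b]` with `F(x) = ξ·F(b)`).  Then `φ` is a continuously
differentiable, strictly increasing bijection from `[0,1]` onto `[a,b]`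
with `φ(0) = a` and `φ(1) = b`, and it satisfies
`ρ(φ(ξ))·φ'(ξ) = ∫_a^b ρ(t) dt` for all `ξ ∈ [0,1]`; that is, `φ` solves
the mesh PDE `(ρ(x)x_ξ)_ξ = 0` with boundary conditions `x(0) = a`,
`x(1) = b`. -/
theorem mesh_generating_function_exists
    (a b : ℝ) (hab : a < b) (ρ : ℝ → ℝ)
    (hρc : ContinuousOn ρ (Set.Icc a b))
    (hρpos : ∀ x ∈ Set.Icc a b, 0 < ρ x) :
    (∀ ξ ∈ Set.Icc (0 : ℝ) 1, ∃! x, x ∈ Set.Icc a b ∧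
        (∫ t in a..x, ρ t) = ξ * ∫ t in a..b, ρ t) ∧
    (∃ φ φ' : ℝ → ℝ,
      (∀ ξ ∈ Set.Icc (0 : ℝ) 1, φ ξ ∈ Set.Icc a b ∧
         (∫ t in a..(φ ξ), ρ t) = ξ * ∫ t in a..b, ρ t) ∧
      φ 0 = a ∧ φ 1 = b ∧
      StrictMonoOn φ (Set.Icc 0 1) ∧
      φ '' Set.Icc 0 1 = Set.Icc a b ∧
      ContinuousOn φ' (Set.Icc 0 1) ∧
      (∀ ξ ∈ Set.Icc (0 : ℝ) 1,
        HasDerivWithinAt φ (φ' ξ) (Set.Icc 0 1) ξ ∧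
        ρ (φ ξ) * φ' ξ = ∫ t in a..b, ρ t)) := by
  set e := meshOrderIso hab hρc hρpos
  have himage : e.symm '' Icc 0 1 = Icc a b := meshOrderIso_symm_image_Icc hab hρc hρpos
  have hmem : ∀ ξ ∈ Icc (0 : ℝ) 1, e.symm ξ ∈ Icc a b := fun ξ hξ =>
    himage ▸ mem_image_of_mem _ hξ
  have hsolves : ∀ ξ ∈ Icc (0 : ℝ) 1, ∫ t in a..e.symm ξ, ρ t = ξ * ∫ t in a..b, ρ t :=
    fun ξ hξ => (meshOrderIso_eq_iff hab hρc hρpos (hmem ξ hξ)).1 (e.apply_symm_apply ξ)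
  obtain ⟨c, hc, hcr⟩ := exists_pos_le_normalizedDensity hab hρc hρpos
  refine ⟨fun ξ hξ => ⟨e.symm ξ, ⟨hmem ξ hξ, hsolves ξ hξ⟩, fun x ⟨hx, hxξ⟩ =>
      e.eq_symm_apply.2 ((meshOrderIso_eq_iff hab hρc hρpos hx).2 hxξ)⟩,
    e.symm, fun ξ => (normalizedDensity hab.le ρ (e.symm ξ))⁻¹,
    fun ξ hξ => ⟨hmem ξ hξ, hsolves ξ hξ⟩,
    meshOrderIso_symm_zero hab hρc hρpos, meshOrderIso_symm_one hab hρc hρpos,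
    e.symm.strictMono.strictMonoOn _, himage, ?_, fun ξ hξ => ⟨?_, ?_⟩⟩
  · exact (((continuous_normalizedDensity hab.le hρc).comp e.symm.continuous).inv₀
      fun ξ => (hc.trans_le (hcr _)).ne').continuousOn
  · exact (hasDerivAt_primitiveOrderIso_symm a _ _ ξ).hasDerivWithinAt
  · beta_reduce
    rw [normalizedDensity_of_mem hab.le (hmem ξ hξ), inv_div,
      mul_div_cancel₀ _ (hρpos _ (hmem ξ hξ)).ne']
end

section
/- Let ρ : [a,b] → ℝ be continuous and strictly positive with a < b. If φ₁, φ₂ : [0,1] → [a,b] are continuously differentiable functions with φ_j(0) = a, φ_j(1) = b, and each satisfies ρ(φ_j(ξ))·φ_j'(ξ) = C_j for some constant C_j (j = 1, 2), then C₁ = C₂ = ∫_a^b ρ(t) dt and φ₁(ξ) = φ₂(ξ) for all ξ ∈ [0,1]. In other words, the mesh PDE (ρ(x)x_ξ)_ξ = 0 with x(0) = a, x(1) = b has a unique C¹ solution. -/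
/-! The primitive `F x = ∫ t in a..x, ρ t` turns the mesh equation into `(F ∘ φ)' = C`: by the
substitution rule `F (φ ξ) = C ξ`, so `ξ = 1` gives `C = F b = ∫ t in a..b, ρ t`, and since
`F` is strictly increasing on `[a, b]` (as `ρ > 0`), `φ ξ` is determined by `F (φ ξ) = F b * ξ`. -/

open Set MeasureTheory intervalIntegral

theorem integral_eq_mul_sub_of_comp_mul_deriv_eq_const {ρ φ φ' : ℝ → ℝ} {s : Set ℝ}
    {p q C ξ : ℝ} (hρ : ContinuousOn ρ s) (hmap : MapsTo φ (Icc p q) s)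
    (hd : ∀ x ∈ Icc p q, HasDerivWithinAt φ (φ' x) (Icc p q) x)
    (hC : ∀ x ∈ Icc p q, ρ (φ x) * φ' x = C) (hξ : ξ ∈ Icc p q) :
    ∫ t in φ p..φ ξ, ρ t = C * (ξ - p) := by
  have hsub : uIcc p ξ ⊆ Icc p q := by
    rw [uIcc_of_le hξ.1]; exact Icc_subset_Icc_right hξ.2
  have hφ : ContinuousOn φ (uIcc p ξ) := fun x hx => (hd x (hsub hx)).continuousWithinAt.mono hsub
  have himage : φ '' uIcc p ξ ⊆ s := (hmap.mono_left hsub).image_subset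
  have hconst : EqOn (fun x => (ρ ∘ φ) x * φ' x) (fun _ => C) (uIcc p ξ) :=
    fun x hx => hC x (hsub hx)
  calc ∫ t in φ p..φ ξ, ρ t = ∫ x in p..ξ, (ρ ∘ φ) x * φ' x := by
        refine (integral_comp_mul_deriv''' hφ (fun x hx => ?_) (hρ.mono ?_)
          ((hρ.mono himage).integrableOn_compact (isCompact_uIcc.image_of_continuousOn hφ))
          ((continuousOn_const.integrableOn_compact isCompact_uIcc).congr_fun hconst.symm
            measurableSet_uIcc)).symm
        · rw [min_eq_left hξ.1, max_eq_right hξ.1] at hx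
          have hx' : x ∈ Ioo p q := ⟨hx.1, hx.2.trans_le hξ.2⟩
          exact ((hd x (Ioo_subset_Icc_self hx')).hasDerivAt
            (Icc_mem_nhds hx'.1 hx'.2)).hasDerivWithinAt
        · exact (image_mono Ioo_subset_Icc_self).trans himage
    _ = ∫ _ in p..ξ, C := integral_congr hconst
    _ = C * (ξ - p) := by rw [intervalIntegral.integral_const, smul_eq_mul, mul_comm]

theorem strictMonoOn_integral_of_pos {ρ : ℝ → ℝ} {a b : ℝ} (hρ : IntegrableOn ρ (Icc a b))
    (hpos : ∀ x ∈ Icc a b, 0 < ρ x) : StrictMonoOn (fun x => ∫ t in a..x, ρ t) (Icc a b) := by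
  intro x hx y hy hxy
  have hint : ∀ z ∈ Icc a b, ∀ w ∈ Icc a b, IntervalIntegrable ρ volume z w :=
    fun z hz w hw => (hρ.mono_set (uIcc_subset_Icc hz hw)).intervalIntegrable
  have hmem : ∀ z ∈ Ioo x y, z ∈ Icc a b := fun z hz => ⟨hx.1.trans hz.1.le, hz.2.le.trans hy.2⟩
  have hxy_pos : 0 < ∫ t in x..y, ρ t :=
    intervalIntegral_pos_of_pos_on (hint x hx y hy) (fun z hz => hpos z (hmem z hz)) hxy
  calc ∫ t in a..x, ρ t < (∫ t in a..x, ρ t) + ∫ t in x..y, ρ t := lt_add_of_pos_right _ hxy_pos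
    _ = ∫ t in a..y, ρ t := integral_add_adjacent_intervals
      (hint a (left_mem_Icc.2 (hx.1.trans hx.2)) x hx) (hint x hx y hy)

theorem mesh_solution_integral_eq {a b C : ℝ} {ρ φ φ' : ℝ → ℝ} (hρ : ContinuousOn ρ (Icc a b))
    (hmap : MapsTo φ (Icc 0 1) (Icc a b))
    (hd : ∀ ξ ∈ Icc (0 : ℝ) 1, HasDerivWithinAt φ (φ' ξ) (Icc 0 1) ξ)
    (h0 : φ 0 = a) (h1 : φ 1 = b) (hC : ∀ ξ ∈ Icc (0 : ℝ) 1, ρ (φ ξ) * φ' ξ = C) :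
    C = ∫ t in a..b, ρ t ∧ ∀ ξ ∈ Icc (0 : ℝ) 1, ∫ t in a..φ ξ, ρ t = C * ξ := by
  have hF : ∀ ξ ∈ Icc (0 : ℝ) 1, ∫ t in a..φ ξ, ρ t = C * ξ := fun ξ hξ => by
    simpa [h0] using integral_eq_mul_sub_of_comp_mul_deriv_eq_const hρ hmap hd hC hξ
  refine ⟨?_, hF⟩
  simpa [h1] using (hF 1 (right_mem_Icc.2 zero_le_one)).symm

theorem mesh_pde_unique_solution_general
    (a b : ℝ) (ρ : ℝ → ℝ)
    (hρc : ContinuousOn ρ (Set.Icc a b))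
    (hρpos : ∀ x ∈ Set.Icc a b, 0 < ρ x)
    (φ₁ φ₁' φ₂ φ₂' : ℝ → ℝ)
    (hmap₁ : Set.MapsTo φ₁ (Set.Icc 0 1) (Set.Icc a b))
    (hmap₂ : Set.MapsTo φ₂ (Set.Icc 0 1) (Set.Icc a b))
    (hd₁ : ∀ ξ ∈ Set.Icc (0 : ℝ) 1, HasDerivWithinAt φ₁ (φ₁' ξ) (Set.Icc 0 1) ξ)
    (hd₂ : ∀ ξ ∈ Set.Icc (0 : ℝ) 1, HasDerivWithinAt φ₂ (φ₂' ξ) (Set.Icc 0 1) ξ)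
    (h₁0 : φ₁ 0 = a) (h₁1 : φ₁ 1 = b)
    (h₂0 : φ₂ 0 = a) (h₂1 : φ₂ 1 = b)
    (C₁ C₂ : ℝ)
    (hC₁ : ∀ ξ ∈ Set.Icc (0 : ℝ) 1, ρ (φ₁ ξ) * φ₁' ξ = C₁)
    (hC₂ : ∀ ξ ∈ Set.Icc (0 : ℝ) 1, ρ (φ₂ ξ) * φ₂' ξ = C₂) :
    C₁ = (∫ t in a..b, ρ t) ∧ C₂ = (∫ t in a..b, ρ t) ∧
    ∀ ξ ∈ Set.Icc (0 : ℝ) 1, φ₁ ξ = φ₂ ξ := by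
  obtain ⟨hI₁, hF₁⟩ := mesh_solution_integral_eq hρc hmap₁ hd₁ h₁0 h₁1 hC₁
  obtain ⟨hI₂, hF₂⟩ := mesh_solution_integral_eq hρc hmap₂ hd₂ h₂0 h₂1 hC₂
  refine ⟨hI₁, hI₂, fun ξ hξ => ?_⟩
  refine (strictMonoOn_integral_of_pos hρc.integrableOn_Icc hρpos).injOn (hmap₁ hξ) (hmap₂ hξ) ?_
  simp only [hF₁ ξ hξ, hF₂ ξ hξ, hI₁, hI₂]

/-- Let `ρ : [a,b] → ℝ` be continuous and strictly positive with `a < b`.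
If `φ₁, φ₂ : [0,1] → [a,b]` are continuously differentiable functions with
`φⱼ(0) = a`, `φⱼ(1) = b`, and each satisfies `ρ(φⱼ(ξ))·φⱼ'(ξ) = Cⱼ` for some
constant `Cⱼ` (`j = 1, 2`), then `C₁ = C₂ = ∫_a^b ρ(t) dt` and
`φ₁(ξ) = φ₂(ξ)` for all `ξ ∈ [0,1]`.  In other words, the mesh PDE
`(ρ(x)x_ξ)_ξ = 0` with `x(0) = a`, `x(1) = b` has a unique `C¹` solution. -/
theorem mesh_pde_unique_solution
    (a b : ℝ) (hab : a < b) (ρ : ℝ → ℝ)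
    (hρc : ContinuousOn ρ (Set.Icc a b))
    (hρpos : ∀ x ∈ Set.Icc a b, 0 < ρ x)
    (φ₁ φ₁' φ₂ φ₂' : ℝ → ℝ)
    (hmap₁ : Set.MapsTo φ₁ (Set.Icc 0 1) (Set.Icc a b))
    (hmap₂ : Set.MapsTo φ₂ (Set.Icc 0 1) (Set.Icc a b))
    (hd₁ : ∀ ξ ∈ Set.Icc (0 : ℝ) 1, HasDerivWithinAt φ₁ (φ₁' ξ) (Set.Icc 0 1) ξ)
    (hc₁ : ContinuousOn φ₁' (Set.Icc 0 1))
    (hd₂ : ∀ ξ ∈ Set.Icc (0 : ℝ) 1, HasDerivWithinAt φ₂ (φ₂' ξ) (Set.Icc 0 1) ξ)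
    (hc₂ : ContinuousOn φ₂' (Set.Icc 0 1))
    (h₁0 : φ₁ 0 = a) (h₁1 : φ₁ 1 = b)
    (h₂0 : φ₂ 0 = a) (h₂1 : φ₂ 1 = b)
    (C₁ C₂ : ℝ)
    (hC₁ : ∀ ξ ∈ Set.Icc (0 : ℝ) 1, ρ (φ₁ ξ) * φ₁' ξ = C₁)
    (hC₂ : ∀ ξ ∈ Set.Icc (0 : ℝ) 1, ρ (φ₂ ξ) * φ₂' ξ = C₂) :
    C₁ = (∫ t in a..b, ρ t) ∧ C₂ = (∫ t in a..b, ρ t) ∧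
    ∀ ξ ∈ Set.Icc (0 : ℝ) 1, φ₁ ξ = φ₂ ξ :=
  mesh_pde_unique_solution_general a b ρ hρc hρpos φ₁ φ₁' φ₂ φ₂' hmap₁ hmap₂ hd₁ hd₂ h₁0 h₁1 h₂0 h₂1
    C₁ C₂ hC₁ hC₂
end

section
/- Let K, σ, λ₀, λ₁ be positive real numbers and let ρ : [0,1] → ℝ be the Bakhvalov mesh density function ρ(x) = max{1, K·λ₀·exp(−λ₀x/σ) + K·λ₁·exp(−λ₁(1−x)/σ)}. Then 1 ≤ ∫_0^1 ρ(x) dx ≤ 1 + 2Kσ. Consequently, for every integer N ≥ 1, any mesh 0 = x₀ < x₁ < ⋯ < x_N = 1 that equidistributes ρ has all mesh widths bounded uniformly in λ₀ and λ₁: x_i − x_{i−1} ≤ (1 + 2Kσ)/N for every i = 1, …, N. -/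
/-!
Since `ρ ≥ 1`, the integral of `ρ` over any interval dominates its length; this gives the lower
bound and, once the mesh equidistributes `ρ`, the bound on the mesh widths. For the upper bound,
`ρ ≤ 1 + K·λ₀·e^{−λ₀x/σ} + K·λ₁·e^{−λ₁(1−x)/σ}`, and each layer term integrates over `[0,1]` to
`Kσ(1 − e^{−λ/σ}) ≤ Kσ`, whatever the layer width `λ`.
-/

open Real intervalIntegral

lemma sub_le_integral_of_one_le {f : ℝ → ℝ} {a b : ℝ} (hab : a ≤ b)
    (hf : IntervalIntegrable f MeasureTheory.volume a b) (h : ∀ t ∈ Set.Icc a b, 1 ≤ f t) :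
    b - a ≤ ∫ t in a..b, f t := by
  simpa using integral_mono_on hab intervalIntegrable_const hf h

lemma integral_max_one_le {g : ℝ → ℝ} {a b : ℝ} (hab : a ≤ b) (hg : Continuous g)
    (hg₀ : ∀ t ∈ Set.Icc a b, 0 ≤ g t) :
    ∫ t in a..b, max 1 (g t) ≤ (b - a) + ∫ t in a..b, g t := by
  have hle : ∀ t ∈ Set.Icc a b, max 1 (g t) ≤ 1 + g t := fun t ht ↦
    max_le (by linarith [hg₀ t ht]) (by linarith)
  calc ∫ t in a..b, max 1 (g t)
      ≤ ∫ t in a..b, (1 + g t) :=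
        integral_mono_on hab ((by fun_prop : Continuous fun t ↦ max 1 (g t)).intervalIntegrable a b)
          ((by fun_prop : Continuous fun t ↦ 1 + g t).intervalIntegrable a b) hle
    _ = (b - a) + ∫ t in a..b, g t := by
        rw [integral_add intervalIntegrable_const (hg.intervalIntegrable a b)]
        simp

lemma integral_mul_exp_neg_mul_div (lam σ b : ℝ) (hσ : σ ≠ 0) :
    ∫ x in (0:ℝ)..b, lam * exp (-(lam * x) / σ) = σ * (1 - exp (-(lam * b) / σ)) := by
  have hderiv : ∀ x ∈ Set.uIcc 0 b,
      HasDerivAt (fun y ↦ -σ * exp (-(lam * y) / σ)) (lam * exp (-(lam * x) / σ)) x := by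
    intro x _
    refine ((((hasDerivAt_id' x).const_mul lam).neg.div_const σ).exp.const_mul (-σ)).congr_deriv ?_
    simp only [Pi.neg_apply]
    field_simp
  rw [integral_eq_sub_of_hasDerivAt hderiv ((by fun_prop : Continuous _).intervalIntegrable 0 b)]
  simp only [mul_zero, neg_zero, zero_div, exp_zero]
  ring

lemma integral_mul_exp_neg_mul_div_le (lam : ℝ) {σ : ℝ} (hσ : 0 < σ) (b : ℝ) :
    ∫ x in (0:ℝ)..b, lam * exp (-(lam * x) / σ) ≤ σ := by
  rw [integral_mul_exp_neg_mul_div lam σ b hσ.ne']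
  nlinarith [exp_pos (-(lam * b) / σ)]

lemma integral_boundary_layers_le {K σ : ℝ} (hK : 0 ≤ K) (hσ : 0 < σ) (lam₀ lam₁ : ℝ) :
    ∫ x in (0:ℝ)..1, (K * lam₀ * exp (-(lam₀ * x) / σ) + K * lam₁ * exp (-(lam₁ * (1 - x)) / σ))
      ≤ 2 * K * σ := by
  have hleft := integral_mul_exp_neg_mul_div_le lam₀ hσ 1
  have hright : ∫ x in (0:ℝ)..1, lam₁ * exp (-(lam₁ * (1 - x)) / σ) ≤ σ := by
    have hreflect := integral_comp_sub_left (fun x ↦ lam₁ * exp (-(lam₁ * x) / σ)) (1:ℝ)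
      (a := 0) (b := 1)
    simp only [sub_self, sub_zero] at hreflect
    exact hreflect ▸ integral_mul_exp_neg_mul_div_le lam₁ hσ 1
  calc ∫ x in (0:ℝ)..1, (K * lam₀ * exp (-(lam₀ * x) / σ) + K * lam₁ * exp (-(lam₁ * (1 - x)) / σ))
      = K * (∫ x in (0:ℝ)..1, lam₀ * exp (-(lam₀ * x) / σ))
          + K * ∫ x in (0:ℝ)..1, lam₁ * exp (-(lam₁ * (1 - x)) / σ) := by
        rw [integral_add ((by fun_prop : Continuous _).intervalIntegrable 0 1)
          ((by fun_prop : Continuous _).intervalIntegrable 0 1), ← integral_const_mul,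
          ← integral_const_mul]
        simp only [mul_assoc]
    _ ≤ K * σ + K * σ := by gcongr
    _ = 2 * K * σ := by ring

/-- Let `K, σ, λ₀, λ₁` be positive real numbers and let `ρ : [0,1] → ℝ` be the
Bakhvalov mesh density function
`ρ(x) = max{1, K·λ₀·exp(−λ₀x/σ) + K·λ₁·exp(−λ₁(1−x)/σ)}`.
Then `1 ≤ ∫_0^1 ρ(x) dx ≤ 1 + 2Kσ`.  Consequently, for every integer
`N ≥ 1`, any mesh `0 = x₀ < x₁ < ⋯ < x_N = 1` that equidistributes `ρ`
has all mesh widths bounded uniformly in `λ₀` and `λ₁`: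
`x_i − x_{i−1} ≤ (1 + 2Kσ)/N` for every `i = 1, …, N`. -/
theorem bakhvalov_density_integral_bounds_and_mesh_widths
    (K σ lam₀ lam₁ : ℝ)
    (hK : 0 < K) (hσ : 0 < σ) (hlam₀ : 0 < lam₀) (hlam₁ : 0 < lam₁)
    (ρ : ℝ → ℝ)
    (hρ : ∀ x : ℝ, ρ x = max 1
        (K * lam₀ * Real.exp (-(lam₀ * x) / σ)
          + K * lam₁ * Real.exp (-(lam₁ * (1 - x)) / σ))) :
    (1 ≤ ∫ x in (0:ℝ)..1, ρ x) ∧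
    ((∫ x in (0:ℝ)..1, ρ x) ≤ 1 + 2 * K * σ) ∧
    (∀ N : ℕ, 1 ≤ N → ∀ x : ℕ → ℝ,
      x 0 = 0 → x N = 1 → (∀ i < N, x i < x (i + 1)) →
      (∀ i < N, ∫ t in (x i)..(x (i + 1)), ρ t
          = (1 / (N : ℝ)) * ∫ t in (0:ℝ)..1, ρ t) →
      ∀ i < N, x (i + 1) - x i ≤ (1 + 2 * K * σ) / N) := by
  have hρ_cont : Continuous ρ := by rw [funext hρ]; fun_prop
  have hlength_le : ∀ a b, a ≤ b → b - a ≤ ∫ t in a..b, ρ t := fun a b hab ↦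
    sub_le_integral_of_one_le hab (hρ_cont.intervalIntegrable a b) fun t _ ↦ (hρ t).ge.trans' (le_max_left _ _)
  have hupper : ∫ x in (0:ℝ)..1, ρ x ≤ 1 + 2 * K * σ := by
    simp only [hρ]
    refine (integral_max_one_le zero_le_one (by fun_prop) fun t _ ↦ by positivity).trans ?_
    linarith [integral_boundary_layers_le hK.le hσ lam₀ lam₁]
  refine ⟨by simpa using hlength_le 0 1 zero_le_one, hupper, ?_⟩
  intro N _ x _ _ hmono hequi i hi
  calc x (i + 1) - x i ≤ ∫ t in (x i)..(x (i + 1)), ρ t := hlength_le _ _ (hmono i hi).le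
    _ = (∫ t in (0:ℝ)..1, ρ t) / N := by rw [hequi i hi, one_div_mul_eq_div]
    _ ≤ (1 + 2 * K * σ) / N := by gcongr
end

section
/- Let K, σ, λ₀, λ₁ be positive real numbers, let ρ(x) = max{1, K·λ₀·exp(−λ₀x/σ) + K·λ₁·exp(−λ₁(1−x)/σ)} on [0,1], let N ≥ 1 be an integer, and let 0 = x₀ < x₁ < ⋯ < x_N = 1 be a mesh that equidistributes ρ. Set I = ∫_0^1 ρ(x) dx. If N satisfies I < K·σ·N, then the first mesh point satisfies x₁ ≤ (σ/λ₀)·ln( KσN / (KσN − I) ); in particular, since I ≤ 1 + 2Kσ, if N > (1 + 2Kσ)/(Kσ) then x₁ ≤ (σ/λ₀)·ln( KσN / (KσN − 1 − 2Kσ) ), so the first mesh interval is of length O(σ/(λ₀N)). The symmetric bound 1 − x_{N−1} ≤ (σ/λ₁)·ln( KσN / (KσN − I) ) holds at the right endpoint. -/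
/-!
On the first mesh interval `ρ` dominates the left layer term `K λ₀ exp (-λ₀ t / σ)`, whose
integral over `[0, x₁]` is `K σ (1 - exp (-λ₀ x₁ / σ))`. Equidistribution bounds this by `I / N`,
and solving for `x₁` gives the logarithmic bound. At the right endpoint the same argument applies
to `ρ (1 - ·)`, the Bakhvalov density with `λ₀` and `λ₁` swapped. Finally `I ≤ 1 + 2 K σ`, since
`ρ` is at most `1` plus the two layer terms and each of these has integral at most `K σ`.
-/

open Real Set MeasureTheory

noncomputable def bakhvalovLayer (K σ lam t : ℝ) : ℝ := K * lam * exp (-(lam * t) / σ)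

noncomputable def bakhvalovDensity (K σ lam₀ lam₁ x : ℝ) : ℝ :=
  max 1 (bakhvalovLayer K σ lam₀ x + bakhvalovLayer K σ lam₁ (1 - x))

theorem integral_bakhvalovLayer {σ lam : ℝ} (K h : ℝ) (hσ : σ ≠ 0) (hlam : lam ≠ 0) :
    ∫ t in (0 : ℝ)..h, bakhvalovLayer K σ lam t = K * σ * (1 - exp (-(lam * h) / σ)) := by
  have hc : -lam / σ ≠ 0 := div_ne_zero (neg_ne_zero.2 hlam) hσ
  simp only [bakhvalovLayer, neg_mul_eq_neg_mul, mul_div_right_comm (-lam)]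
  rw [intervalIntegral.integral_const_mul,
    intervalIntegral.integral_comp_mul_left (fun t => exp t) hc, integral_exp, mul_zero,
    exp_zero, smul_eq_mul]
  field_simp
  ring

theorem integral_bakhvalovLayer_le {K σ lam : ℝ} (h : ℝ) (hK : 0 ≤ K) (hσ : 0 < σ)
    (hlam : lam ≠ 0) : ∫ t in (0 : ℝ)..h, bakhvalovLayer K σ lam t ≤ K * σ := by
  rw [integral_bakhvalovLayer K h hσ.ne' hlam]
  have := mul_nonneg (mul_nonneg hK hσ.le) (exp_pos (-(lam * h) / σ)).le
  linarith

theorem bakhvalovLayer_nonneg {K lam : ℝ} (σ t : ℝ) (hK : 0 ≤ K) (hlam : 0 ≤ lam) :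
    0 ≤ bakhvalovLayer K σ lam t := by
  unfold bakhvalovLayer; positivity

@[fun_prop]
theorem continuous_bakhvalovLayer (K σ lam : ℝ) : Continuous (bakhvalovLayer K σ lam) := by
  unfold bakhvalovLayer; fun_prop

theorem continuous_bakhvalovDensity (K σ lam₀ lam₁ : ℝ) :
    Continuous (bakhvalovDensity K σ lam₀ lam₁) := by
  unfold bakhvalovDensity; fun_prop

theorem bakhvalovDensity_one_sub (K σ lam₀ lam₁ x : ℝ) :
    bakhvalovDensity K σ lam₀ lam₁ (1 - x) = bakhvalovDensity K σ lam₁ lam₀ x := by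
  simp only [bakhvalovDensity, sub_sub_cancel, add_comm]

theorem integral_bakhvalovDensity_swap (K σ lam₀ lam₁ a : ℝ) :
    ∫ t in (0 : ℝ)..1 - a, bakhvalovDensity K σ lam₁ lam₀ t
      = ∫ t in a..1, bakhvalovDensity K σ lam₀ lam₁ t := by
  simp only [← bakhvalovDensity_one_sub K σ lam₀ lam₁]
  rw [intervalIntegral.integral_comp_sub_left, sub_sub_cancel, sub_zero]

theorem bakhvalovLayer_le_bakhvalovDensity {K σ lam₀ lam₁ : ℝ} (x : ℝ) (hK : 0 ≤ K)
    (hlam₁ : 0 ≤ lam₁) : bakhvalovLayer K σ lam₀ x ≤ bakhvalovDensity K σ lam₀ lam₁ x :=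
  le_max_of_le_right (le_add_of_nonneg_right (bakhvalovLayer_nonneg σ _ hK hlam₁))

theorem integral_bakhvalovDensity_le {K σ lam₀ lam₁ : ℝ} (hK : 0 ≤ K) (hσ : 0 < σ)
    (hlam₀ : 0 < lam₀) (hlam₁ : 0 < lam₁) :
    ∫ x in (0 : ℝ)..1, bakhvalovDensity K σ lam₀ lam₁ x ≤ 1 + 2 * K * σ := by
  have hle : ∀ x, bakhvalovDensity K σ lam₀ lam₁ x
      ≤ 1 + bakhvalovLayer K σ lam₀ x + bakhvalovLayer K σ lam₁ (1 - x) := fun x =>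
    max_le (by linarith [bakhvalovLayer_nonneg σ x hK hlam₀.le,
      bakhvalovLayer_nonneg σ (1 - x) hK hlam₁.le]) (by linarith)
  have hreflect : ∫ x in (0 : ℝ)..1, bakhvalovLayer K σ lam₁ (1 - x)
      = ∫ x in (0 : ℝ)..1, bakhvalovLayer K σ lam₁ x := by
    simp [intervalIntegral.integral_comp_sub_left]
  calc ∫ x in (0 : ℝ)..1, bakhvalovDensity K σ lam₀ lam₁ x
      ≤ ∫ x in (0 : ℝ)..1, (1 + bakhvalovLayer K σ lam₀ x + bakhvalovLayer K σ lam₁ (1 - x)) :=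
        intervalIntegral.integral_mono_on zero_le_one
          ((continuous_bakhvalovDensity _ _ _ _).intervalIntegrable _ _)
          (Continuous.intervalIntegrable (by fun_prop) _ _) fun x _ => hle x
    _ = 1 + (∫ x in (0 : ℝ)..1, bakhvalovLayer K σ lam₀ x)
          + ∫ x in (0 : ℝ)..1, bakhvalovLayer K σ lam₁ x := by
        rw [intervalIntegral.integral_add, intervalIntegral.integral_add, hreflect,
          intervalIntegral.integral_const, sub_zero, one_smul]
        all_goals exact Continuous.intervalIntegrable (by fun_prop) _ _
    _ ≤ 1 + 2 * K * σ := by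
        linarith [integral_bakhvalovLayer_le 1 hK hσ hlam₀.ne',
          integral_bakhvalovLayer_le 1 hK hσ hlam₁.ne']

theorem le_div_mul_log_of_mul_one_sub_exp_le {M J σ lam u : ℝ} (hσ : 0 < σ) (hlam : 0 < lam)
    (hJ : J < M) (h : M * (1 - exp (-(lam * u) / σ)) ≤ J) :
    u ≤ σ / lam * log (M / (M - J)) := by
  have hMJ : 0 < M - J := sub_pos.2 hJ
  have hM : 0 < M := by nlinarith [exp_pos (-(lam * u) / σ)]
  have hexp : (M - J) / M ≤ exp (-(lam * u) / σ) := by rw [div_le_iff₀ hM]; linarith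
  have hlog : -log (M / (M - J)) ≤ -(lam * u) / σ := by
    rw [← log_inv, inv_div, ← log_exp (-(lam * u) / σ)]
    exact log_le_log (div_pos hMJ hM) hexp
  rw [div_mul_eq_mul_div, le_div_iff₀ hlam]
  have := mul_le_mul_of_nonneg_left hlog hσ.le
  rw [mul_div_cancel₀ _ hσ.ne'] at this
  linarith

theorem le_div_mul_log_of_bakhvalovLayer_le {ρ : ℝ → ℝ} {K σ lam J N h : ℝ} (hσ : 0 < σ)
    (hlam : 0 < lam) (hN : 0 < N) (hh : 0 ≤ h) (hρ : IntervalIntegrable ρ volume 0 h)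
    (hlayer : ∀ t ∈ Icc 0 h, bakhvalovLayer K σ lam t ≤ ρ t)
    (hmass : ∫ t in (0 : ℝ)..h, ρ t = 1 / N * J) (hJ : J < K * σ * N) :
    h ≤ σ / lam * log (K * σ * N / (K * σ * N - J)) := by
  refine le_div_mul_log_of_mul_one_sub_exp_le hσ hlam hJ ?_
  have hint : K * σ * (1 - exp (-(lam * h) / σ)) ≤ 1 / N * J := by
    rw [← integral_bakhvalovLayer K h hσ.ne' hlam.ne', ← hmass]
    exact intervalIntegral.integral_mono_on hh
      ((continuous_bakhvalovLayer K σ lam).intervalIntegrable _ _) hρ hlayer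
  rw [one_div_mul_eq_div, le_div_iff₀ hN] at hint
  linarith

/-- Let `K, σ, λ₀, λ₁` be positive reals, let
`ρ(x) = max{1, K·λ₀·exp(−λ₀x/σ) + K·λ₁·exp(−λ₁(1−x)/σ)}` on `[0,1]`,
let `N ≥ 1` be an integer, and let `0 = x₀ < x₁ < ⋯ < x_N = 1` be a mesh
that equidistributes `ρ`.  Set `I = ∫_0^1 ρ(x) dx`.  If `N` satisfies
`I < KσN`, then the first mesh point satisfies
`x₁ ≤ (σ/λ₀)·ln(KσN / (KσN − I))` and, symmetrically, the bound
`1 − x_{N−1} ≤ (σ/λ₁)·ln(KσN / (KσN − I))` holds at the right endpoint;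
in particular, since `I ≤ 1 + 2Kσ`, if `N > (1 + 2Kσ)/(Kσ)` then
`x₁ ≤ (σ/λ₀)·ln(KσN / (KσN − 1 − 2Kσ))`. -/
theorem bakhvalov_first_mesh_interval_bound
    (K σ lam₀ lam₁ : ℝ)
    (hK : 0 < K) (hσ : 0 < σ) (hlam₀ : 0 < lam₀) (hlam₁ : 0 < lam₁)
    (ρ : ℝ → ℝ)
    (hρ : ∀ x : ℝ, ρ x = max 1
        (K * lam₀ * Real.exp (-(lam₀ * x) / σ)
          + K * lam₁ * Real.exp (-(lam₁ * (1 - x)) / σ)))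
    (N : ℕ) (hN : 1 ≤ N) (x : ℕ → ℝ)
    (hx0 : x 0 = 0) (hxN : x N = 1)
    (hmono : ∀ i < N, x i < x (i + 1))
    (hequi : ∀ i < N, ∫ t in (x i)..(x (i + 1)), ρ t
        = (1 / (N : ℝ)) * ∫ s in (0:ℝ)..1, ρ s)
    (I : ℝ) (hI : I = ∫ s in (0:ℝ)..1, ρ s) :
    (I < K * σ * N →
      x 1 ≤ (σ / lam₀) * Real.log (K * σ * N / (K * σ * N - I)) ∧
      1 - x (N - 1) ≤ (σ / lam₁) * Real.log (K * σ * N / (K * σ * N - I))) ∧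
    ((1 + 2 * K * σ) / (K * σ) < (N : ℝ) →
      x 1 ≤ (σ / lam₀) *
        Real.log (K * σ * N / (K * σ * N - 1 - 2 * K * σ))) := by
  obtain rfl : ρ = bakhvalovDensity K σ lam₀ lam₁ := funext hρ
  simp only [← hI] at hequi
  have hNpos : (0 : ℝ) < N := by exact_mod_cast hN
  have hpred : N - 1 + 1 = N := by omega
  have hleft : I < K * σ * N → x 1 ≤ σ / lam₀ * log (K * σ * N / (K * σ * N - I)) :=
    le_div_mul_log_of_bakhvalovLayer_le hσ hlam₀ hNpos (hx0 ▸ hmono 0 hN).le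
      ((continuous_bakhvalovDensity _ _ _ _).intervalIntegrable _ _)
      (fun t _ => bakhvalovLayer_le_bakhvalovDensity t hK.le hlam₁.le) (hx0 ▸ hequi 0 hN)
  have hright : I < K * σ * N →
      1 - x (N - 1) ≤ σ / lam₁ * log (K * σ * N / (K * σ * N - I)) := by
    have hlast := hmono (N - 1) (by omega)
    have hmass := hequi (N - 1) (by omega)
    rw [hpred, hxN] at hlast hmass
    exact le_div_mul_log_of_bakhvalovLayer_le hσ hlam₁ hNpos (sub_nonneg.2 hlast.le)
      ((continuous_bakhvalovDensity _ _ _ _).intervalIntegrable _ _)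
      (fun t _ => bakhvalovLayer_le_bakhvalovDensity t hK.le hlam₀.le)
      (integral_bakhvalovDensity_swap K σ lam₀ lam₁ _ ▸ hmass)
  refine ⟨fun hIN => ⟨hleft hIN, hright hIN⟩, fun hNlarge => ?_⟩
  have hI_le : I ≤ 1 + 2 * K * σ := hI ▸ integral_bakhvalovDensity_le hK.le hσ hlam₀ hlam₁
  have hlarge : 1 + 2 * K * σ < K * σ * N := by
    linarith [(div_lt_iff₀ (by positivity)).1 hNlarge]
  calc x 1 ≤ σ / lam₀ * log (K * σ * N / (K * σ * N - I)) := hleft (by linarith)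
    _ ≤ σ / lam₀ * log (K * σ * N / (K * σ * N - 1 - 2 * K * σ)) := by
      have hgap : 0 < K * σ * N - 1 - 2 * K * σ := by linarith
      gcongr σ / lam₀ * log (_ / ?_)
      · exact div_pos (by positivity) (by linarith)
      · linarith
end
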